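/- Scalar version of Proposition 2: for y, z ∈ ℝ^N, α > 0, κ > 0, the unique minimizer over x ∈ ℝ^N of α·h_κ(x'z) + (1/2)‖x−y‖₂² is x̂ = y − H·z where, with w = y'z and ζ = ‖z‖₂²: H = w/(α^{-1}+ζ) if |w| ≤ κ(1+αζ); H = ακ if w > κ(1+αζ); and H = −ακ if w < −κ(1+αζ). -/
import Mathlib


open Matrix

noncomputable def huber (κ x : ℝ) : ℝ :=
  if |x| ≤ κ then x ^ 2 / 2 else κ * |x| - κ ^ 2 / 2

lemma huber_lower_mid (κ s t : ℝ) (hκ : 0 < κ) (hs : |s| ≤ κ) :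
    huber κ s + s * (t - s) ≤ huber κ t := by
  unfold huber
  rw [if_pos hs]
  by_cases ht : |t| ≤ κ
  · rw [if_pos ht]; nlinarith [sq_nonneg (t - s)]
  · rw [if_neg ht]
    push_neg at ht
    have h1 : s * t ≤ |s| * |t| := by
      calc s * t ≤ |s * t| := le_abs_self _
        _ = |s| * |t| := abs_mul s t
    have h2 : |s| ≥ 0 := abs_nonneg s
    nlinarith [sq_abs s, mul_nonneg (sub_nonneg.mpr hs) (le_of_lt (sub_pos.mpr ht))]

lemma huber_lower_top (κ s t : ℝ) (hκ : 0 < κ) (hs : κ ≤ s) :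
    huber κ s + κ * (t - s) ≤ huber κ t := by
  unfold huber
  have hsa : |s| = s := abs_of_nonneg (le_trans hκ.le hs)
  by_cases hs' : |s| ≤ κ
  · rw [if_pos hs']
    have hsk : s = κ := le_antisymm (hsa ▸ hs') hs
    rw [hsk]
    by_cases ht : |t| ≤ κ
    · rw [if_pos ht]; nlinarith [sq_nonneg (t - κ)]
    · rw [if_neg ht]; push_neg at ht
      nlinarith [le_abs_self t]
  · rw [if_neg hs', hsa]
    by_cases ht : |t| ≤ κ
    · rw [if_pos ht]
      have := abs_le.mp ht
      nlinarith [sq_nonneg (t - κ)]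
    · rw [if_neg ht]
      nlinarith [le_abs_self t]

lemma huber_lower_bot (κ s t : ℝ) (hκ : 0 < κ) (hs : s ≤ -κ) :
    huber κ s + (-κ) * (t - s) ≤ huber κ t := by
  have h := huber_lower_top κ (-s) (-t) hκ (by linarith)
  have e : ∀ u : ℝ, huber κ (-u) = huber κ u := by
    intro u; unfold huber; rw [abs_neg]; rcases le_or_gt |u| κ with h | h
    · rw [if_pos h, if_pos h]; ring
    · rw [if_neg (not_le.mpr h), if_neg (not_le.mpr h)]
  rw [e, e] at h
  linarith

theorem prop2_huber_prox_vector {N : ℕ}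
    (y z : Fin N → ℝ) (α κ : ℝ) (hα : 0 < α) (hκ : 0 < κ) :
    let w : ℝ := y ⬝ᵥ z
    let ζ : ℝ := ∑ j, z j ^ 2
    let H : ℝ :=
      if |w| ≤ κ * (1 + α * ζ) then w / (α⁻¹ + ζ)
      else if w > κ * (1 + α * ζ) then α * κ else -(α * κ)
    let xhat : Fin N → ℝ := y - H • z
    ∀ x : Fin N → ℝ, x ≠ xhat →
      α * huber κ (xhat ⬝ᵥ z) + (1 / 2) * (∑ j, (xhat j - y j) ^ 2) <
        α * huber κ (x ⬝ᵥ z) + (1 / 2) * (∑ j, (x j - y j) ^ 2) := by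
  intro w ζ H xhat x hx
  have hζ : 0 ≤ ζ := Finset.sum_nonneg fun j _ => sq_nonneg _
  have hden : 0 < α⁻¹ + ζ := by positivity
  -- shat = xhat ⬝ᵥ z
  have h1 : xhat ⬝ᵥ z = w - H * ζ := by
    show (fun j => (y - H • z) j) ⬝ᵥ z = w - H * ζ
    simp only [Pi.sub_apply, Pi.smul_apply, smul_eq_mul, dotProduct, w, ζ]
    rw [Finset.mul_sum, ← Finset.sum_sub_distrib]
    exact Finset.sum_congr rfl fun j _ => by ring
  have h2 : x ⬝ᵥ z = (x - xhat) ⬝ᵥ z + (w - H * ζ) := by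
    rw [← h1]
    simp [dotProduct, ← Finset.sum_add_distrib]
    exact Finset.sum_congr rfl fun j _ => by ring
  have h3 : (∑ j, (xhat j - y j) ^ 2) = H ^ 2 * ζ := by
    simp only [xhat, Pi.sub_apply, Pi.smul_apply, smul_eq_mul, ζ]
    rw [Finset.mul_sum]
    exact Finset.sum_congr rfl fun j _ => by ring
  have h4 : (∑ j, (x j - y j) ^ 2) =
      (∑ j, (x j - xhat j) ^ 2) - 2 * H * ((x - xhat) ⬝ᵥ z) + H ^ 2 * ζ := by
    simp only [dotProduct, Pi.sub_apply, ζ, xhat, Pi.smul_apply, smul_eq_mul]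
    rw [Finset.mul_sum, Finset.mul_sum, ← Finset.sum_sub_distrib,
      ← Finset.sum_add_distrib]
    exact Finset.sum_congr rfl fun j _ => by ring
  have h5 : 0 < ∑ j, (x j - xhat j) ^ 2 := by
    have hne : ∃ j, x j ≠ xhat j := by
      by_contra hcon
      push_neg at hcon
      exact hx (funext hcon)
    obtain ⟨j0, hj0⟩ := hne
    have : (0:ℝ) < (x j0 - xhat j0) ^ 2 := by
      have : x j0 - xhat j0 ≠ 0 := sub_ne_zero.mpr hj0
      positivity
    exact Finset.sum_pos' (fun j _ => sq_nonneg _) ⟨j0, Finset.mem_univ _, this⟩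
  -- key subgradient inequality
  have h6 : ∀ t : ℝ, α * huber κ (w - H * ζ) + H * (t - (w - H * ζ)) ≤ α * huber κ t := by
    intro t
    by_cases hcase : |w| ≤ κ * (1 + α * ζ)
    · have hH : H = w / (α⁻¹ + ζ) := if_pos hcase
      set s : ℝ := w - H * ζ with hs
      have hαs : α * s = H := by
        rw [hs, hH]; field_simp; ring
      have hsval : s * (1 + α * ζ) = w := by
        rw [hs, hH]; field_simp; ring
      have habs : |s| ≤ κ := by
        have hpos : 0 < 1 + α * ζ := by positivity
        have : |s| * (1 + α * ζ) = |w| := by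
          rw [← hsval, abs_mul, abs_of_pos hpos]
        nlinarith [abs_nonneg s]
      have hmul := mul_le_mul_of_nonneg_left (huber_lower_mid κ s t hκ habs) hα.le
      calc α * huber κ s + H * (t - s) = α * (huber κ s + s * (t - s)) := by
            rw [← hαs]; ring
        _ ≤ α * huber κ t := hmul
    · have hH' : H = if w > κ * (1 + α * ζ) then α * κ else -(α * κ) := if_neg hcase
      push_neg at hcase
      by_cases hw : w > κ * (1 + α * ζ)
      · have hH : H = α * κ := by rw [hH', if_pos hw]
        set s : ℝ := w - H * ζ with hs
        have hsk : κ ≤ s := by rw [hs, hH]; nlinarith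
        have hmul := mul_le_mul_of_nonneg_left (huber_lower_top κ s t hκ hsk) hα.le
        calc α * huber κ s + H * (t - s) = α * (huber κ s + κ * (t - s)) := by
              rw [hH]; ring
          _ ≤ α * huber κ t := hmul
      · have hH : H = -(α * κ) := by rw [hH', if_neg hw]
        push_neg at hw
        have hw' : w < -(κ * (1 + α * ζ)) := by
          rcases abs_cases w with ⟨h, _⟩ | ⟨h, _⟩
          · linarith
          · linarith
        set s : ℝ := w - H * ζ with hs
        have hsk : s ≤ -κ := by rw [hs, hH]; nlinarith
        have hmul := mul_le_mul_of_nonneg_left (huber_lower_bot κ s t hκ hsk) hα.le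
        calc α * huber κ s + H * (t - s) = α * (huber κ s + (-κ) * (t - s)) := by
              rw [hH]; ring
          _ ≤ α * huber κ t := hmul
  have h7 := h6 (x ⬝ᵥ z)
  rw [h2] at h7
  rw [h1, h2, h3, h4]
  linarith
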